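/- arXiv:1308.0182 — 3 statements merged into one kernel-verified Lean document; each statement's English description precedes it below -/
import Mathlib

section
/- Let A and B be real 2×2 matrices such that Bᵀ A = Aᵀ B, and suppose that the only vector ξ ∈ ℝ² with A ξ = 0 and B ξ = 0 is ξ = 0. Then for every real ε > 0, the complex 2×2 matrix A − i ε B (entries a_{jk} − i ε b_{jk}) has nonzero determinant. -/
/-!
Write a kernel vector of `A - iεB` as `x + iy` with `x y` real, so that `A x = -ε B y` and
`A y = ε B x`. The symmetry `Bᵀ A = Aᵀ B` gives `⟪B x, A y⟫ = ⟪B y, A x⟫`, that is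
`ε (|B x|² + |B y|²) = 0`. Hence `B x = B y = 0`, then `A x = A y = 0`, and the common kernel
of `A` and `B` forces `x = y = 0`.
-/

open Matrix

variable {n : Type*} [Fintype n]

section Real

variable {A B : Matrix n n ℝ}

lemma dotProduct_mulVec_comm_of_transpose_mul_eq (hsym : Bᵀ * A = Aᵀ * B) (x y : n → ℝ) :
    B *ᵥ x ⬝ᵥ A *ᵥ y = B *ᵥ y ⬝ᵥ A *ᵥ x := by
  rw [dotProduct_comm (B *ᵥ y), dotProduct_mulVec, dotProduct_mulVec, ← vecMul_transpose,
    ← vecMul_transpose, vecMul_vecMul, vecMul_vecMul, hsym]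

lemma mulVec_eq_zero_of_transpose_mul_eq {ε : ℝ} (hsym : Bᵀ * A = Aᵀ * B) (hε : ε ≠ 0)
    {x y : n → ℝ} (hx : A *ᵥ x = -ε • B *ᵥ y) (hy : A *ᵥ y = ε • B *ᵥ x) :
    B *ᵥ x = 0 ∧ B *ᵥ y = 0 := by
  have hsum : B *ᵥ x ⬝ᵥ B *ᵥ x + B *ᵥ y ⬝ᵥ B *ᵥ y = 0 := by
    have h := dotProduct_mulVec_comm_of_transpose_mul_eq hsym x y
    rw [hx, hy, dotProduct_smul, dotProduct_smul, smul_eq_mul, smul_eq_mul] at h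
    exact (mul_eq_zero.mp (by linear_combination h)).resolve_left hε
  have nonneg (v : n → ℝ) : 0 ≤ v ⬝ᵥ v := Finset.sum_nonneg fun i _ => mul_self_nonneg (v i)
  exact ⟨dotProduct_self_eq_zero.mp (by linarith [nonneg (B *ᵥ x), nonneg (B *ᵥ y)]),
    dotProduct_self_eq_zero.mp (by linarith [nonneg (B *ᵥ x), nonneg (B *ᵥ y)])⟩

end Real

section Complex

variable (A B : Matrix n n ℝ) (ε : ℝ) (v : n → ℂ)

lemma re_mulVec_sub_mul_I :
    (fun i => ((of fun i j => (A i j : ℂ) - ε * Complex.I * B i j) *ᵥ v) i |>.re) =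
      A *ᵥ (fun j => (v j).re) + ε • B *ᵥ (fun j => (v j).im) := by
  ext i
  simp only [mulVec, dotProduct, of_apply, Complex.re_sum, Pi.add_apply, Pi.smul_apply,
    smul_eq_mul, Finset.mul_sum, ← Finset.sum_add_distrib]
  refine Finset.sum_congr rfl fun j _ => ?_
  simp only [Complex.mul_re, Complex.sub_re, Complex.sub_im, Complex.mul_im, Complex.ofReal_re,
    Complex.ofReal_im, Complex.I_re, Complex.I_im]
  ring

lemma im_mulVec_sub_mul_I :
    (fun i => ((of fun i j => (A i j : ℂ) - ε * Complex.I * B i j) *ᵥ v) i |>.im) =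
      A *ᵥ (fun j => (v j).im) - ε • B *ᵥ (fun j => (v j).re) := by
  ext i
  simp only [mulVec, dotProduct, of_apply, Complex.im_sum, Pi.sub_apply, Pi.smul_apply,
    smul_eq_mul, Finset.mul_sum, ← Finset.sum_sub_distrib]
  refine Finset.sum_congr rfl fun j _ => ?_
  simp only [Complex.mul_re, Complex.sub_re, Complex.sub_im, Complex.mul_im, Complex.ofReal_re,
    Complex.ofReal_im, Complex.I_re, Complex.I_im]
  ring

end Complex

/-- Lemma 2(ii): if `Bᵀ A = Aᵀ B` (the Lagrangian property) and the stacked matrix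
`(A; B)` has trivial kernel, then `det(A − iεB) ≠ 0` for every `ε > 0`. -/
theorem det_sub_smul_I_ne_zero
    (A B : Matrix (Fin 2) (Fin 2) ℝ)
    (hsym : Bᵀ * A = Aᵀ * B)
    (hker : ∀ ξ : Fin 2 → ℝ, A.mulVec ξ = 0 → B.mulVec ξ = 0 → ξ = 0)
    (ε : ℝ) (hε : 0 < ε) :
    (Matrix.of fun i j => (A i j : ℂ) - (ε : ℂ) * Complex.I * (B i j : ℂ)).det ≠ 0 := by
  intro hdet
  obtain ⟨v, hv, hMv⟩ := exists_mulVec_eq_zero_iff.mpr hdet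
  set x : Fin 2 → ℝ := fun j => (v j).re
  set y : Fin 2 → ℝ := fun j => (v j).im
  have hx : A *ᵥ x = -ε • B *ᵥ y := by
    rw [neg_smul, eq_neg_iff_add_eq_zero, ← re_mulVec_sub_mul_I, hMv]
    rfl
  have hy : A *ᵥ y = ε • B *ᵥ x := by
    rw [← sub_eq_zero, ← im_mulVec_sub_mul_I, hMv]
    rfl
  obtain ⟨hBx, hBy⟩ := mulVec_eq_zero_of_transpose_mul_eq hsym hε.ne' hx hy
  have hx0 : x = 0 := hker x (by rw [hx, hBy, smul_zero]) hBx
  have hy0 : y = 0 := hker y (by rw [hy, hBx, smul_zero]) hBy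
  exact hv (funext fun j => Complex.ext (congrFun hx0 j) (congrFun hy0 j))
end

section
/- Let P, Pτ, Pψ, Xτ, Xψ ∈ ℝ² satisfy ⟨P, Xτ⟩ = 1, ⟨P, Xψ⟩ = 0, P₂ = 0, and det(P, Pψ) = P₁(Pψ)₂ − P₂(Pψ)₁ ≠ 0. Then (Xτ)₁ (Pψ)₂ − (Xψ)₁ (Pτ)₂ ≠ 0. -/
open scoped RealInnerProductSpace

/-! When `P₂ = 0`, multiplying the mixed Jacobian by `P₁²` turns each of its two terms into a
product of an inner product with a determinant:
`P₁² 𝒥ₛ = ⟨P, Xτ⟩ det(P, Pψ) − ⟨P, Xψ⟩ det(P, Pτ)`, which equals `det(P, Pψ) ≠ 0` under the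
normalisations `⟨P, Xτ⟩ = 1`, `⟨P, Xψ⟩ = 0`. -/

namespace EuclideanSpace

theorem inner_fin_two (u v : EuclideanSpace ℝ (Fin 2)) : ⟪u, v⟫ = u 0 * v 0 + u 1 * v 1 := by
  simp only [PiLp.inner_apply, Fin.sum_univ_two, RCLike.inner_apply, conj_trivial]
  ring

end EuclideanSpace

theorem sq_mul_mixed_jacobian_of_snd_eq_zero (P Pτ Pψ Xτ Xψ : EuclideanSpace ℝ (Fin 2))
    (hP2 : P 1 = 0) :
    P 0 ^ 2 * (Xτ 0 * Pψ 1 - Xψ 0 * Pτ 1) =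
      ⟪P, Xτ⟫ * (P 0 * Pψ 1 - P 1 * Pψ 0) - ⟪P, Xψ⟫ * (P 0 * Pτ 1 - P 1 * Pτ 0) := by
  simp only [EuclideanSpace.inner_fin_two, hP2]
  ring

/-- Appendix 1 lemma: at a point of the Lagrangian manifold with eikonal
coordinates where `P₂ = 0` and `det(P, Pψ) ≠ 0`, the mixed Jacobian
`𝒥ₛ = (Xτ)₁(Pψ)₂ − (Xψ)₁(Pτ)₂` is nonzero. -/
theorem mixed_jacobian_ne_zero
    (P Pτ Pψ Xτ Xψ : EuclideanSpace ℝ (Fin 2))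
    (h1 : ⟪P, Xτ⟫ = 1) (h2 : ⟪P, Xψ⟫ = 0) (hP2 : P 1 = 0)
    (hdet : P 0 * Pψ 1 - P 1 * Pψ 0 ≠ 0) :
    Xτ 0 * Pψ 1 - Xψ 0 * Pτ 1 ≠ 0 := by
  have key := sq_mul_mixed_jacobian_of_snd_eq_zero P Pτ Pψ Xτ Xψ hP2
  rw [h1, h2, one_mul, zero_mul, sub_zero] at key
  exact right_ne_zero_of_mul (key ▸ hdet)
end

section
/- Let n : ℝ → ℝ be continuously differentiable with n(r) > 0 for all r, let T(r) = ∫₀^r n(s) ds, let I ⊆ ℝ be an open interval, and let ρ : I → ℝ be differentiable with ρ(τ) > 0 and T(ρ(τ)) = τ for all τ ∈ I. Define X(τ, ψ) = ρ(τ) n(ψ) and P(τ, ψ) = n(ρ(τ)) n(ψ), where n(ψ) = (cos ψ, sin ψ). Then for all τ ∈ I and ψ ∈ ℝ: ∂X/∂τ(τ,ψ) = P(τ,ψ) / (‖P(τ,ψ)‖ · n(‖X(τ,ψ)‖)) and ∂P/∂τ(τ,ψ) = ‖P(τ,ψ)‖ · n′(‖X(τ,ψ)‖) · X(τ,ψ)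 / (n(‖X(τ,ψ)‖)² · ‖X(τ,ψ)‖). -/
open Real
open scoped RealInnerProductSpace

/-- The unit vector `n(ψ) = (cos ψ, sin ψ)` in `ℝ²`. -/
noncomputable def unitVec (ψ : ℝ) : EuclideanSpace ℝ (Fin 2) :=
  (WithLp.equiv 2 (Fin 2 → ℝ)).symm ![Real.cos ψ, Real.sin ψ]

/-!
Since `T' = n > 0`, the inverse function theorem gives `ρ' = 1 / n(ρ)`. Hence
`X_τ = n(ρ)⁻¹ • n(ψ)` and `P_τ = n'(ρ) n(ρ)⁻¹ • n(ψ)`, while `‖X‖ = ρ` and `‖P‖ = n(ρ)` because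
`n(ψ)` is a unit vector; both Hamilton equations then reduce to identities between scalar
multiples of `n(ψ)`.
-/

lemma norm_unitVec (ψ : ℝ) : ‖unitVec ψ‖ = 1 := by
  rw [unitVec, EuclideanSpace.norm_eq, Real.sqrt_eq_one]
  simp [Fin.sum_univ_two]

lemma hasDerivAt_of_integral_comp_eq {f ρ : ℝ → ℝ} {I : Set ℝ} {a τ : ℝ} (hf : Continuous f)
    (hI : IsOpen I) (hρ : ∀ t ∈ I, ∫ s in a..ρ t, f s = t) (hτ : τ ∈ I)
    (hρτ : ContinuousAt ρ τ) (hfρ : f (ρ τ) ≠ 0) :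
    HasDerivAt ρ (f (ρ τ))⁻¹ τ :=
  HasDerivAt.of_local_left_inverse hρτ (hf.integral_hasStrictDerivAt a (ρ τ)).hasDerivAt hfρ
    (Filter.eventually_of_mem (hI.mem_nhds hτ) hρ)

theorem axisymmetric_hamiltonian_system_general
    (n : ℝ → ℝ) (hn : ContDiff ℝ 1 n) (hnpos : ∀ r, 0 < n r)
    (T : ℝ → ℝ) (hT : ∀ r, T r = ∫ s in (0:ℝ)..r, n s)
    (I : Set ℝ) (hIopen : IsOpen I)
    (ρ : ℝ → ℝ)
    (hρdiff : ∀ τ ∈ I, DifferentiableAt ℝ ρ τ)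
    (hρpos : ∀ τ ∈ I, 0 < ρ τ)
    (hTρ : ∀ τ ∈ I, T (ρ τ) = τ)
    (X P : ℝ → ℝ → EuclideanSpace ℝ (Fin 2))
    (hX : ∀ τ ψ, X τ ψ = ρ τ • unitVec ψ)
    (hP : ∀ τ ψ, P τ ψ = n (ρ τ) • unitVec ψ) :
    ∀ τ ∈ I, ∀ ψ : ℝ,
      deriv (fun t => X t ψ) τ = (1 / (‖P τ ψ‖ * n ‖X τ ψ‖)) • P τ ψ ∧
      deriv (fun t => P t ψ) τ =
        ((‖P τ ψ‖ * deriv n ‖X τ ψ‖) / ((n ‖X τ ψ‖) ^ 2 * ‖X τ ψ‖)) • X τ ψ := by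
  intro τ hτ ψ
  have hρ' : HasDerivAt ρ (n (ρ τ))⁻¹ τ :=
    hasDerivAt_of_integral_comp_eq hn.continuous hIopen (fun t ht => hT (ρ t) ▸ hTρ t ht) hτ
      (hρdiff τ hτ).continuousAt (hnpos _).ne'
  have hX' : deriv (fun t => X t ψ) τ = (n (ρ τ))⁻¹ • unitVec ψ := by
    simp_rw [hX]
    exact (hρ'.smul_const _).deriv
  have hP' : deriv (fun t => P t ψ) τ = (deriv n (ρ τ) * (n (ρ τ))⁻¹) • unitVec ψ := by
    simp_rw [hP]
    exact ((hn.differentiable_one _).hasDerivAt.comp τ hρ' |>.smul_const _).deriv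
  have hXnorm : ‖X τ ψ‖ = ρ τ := by
    rw [hX, norm_smul, norm_unitVec, mul_one, norm_of_nonneg (hρpos τ hτ).le]
  have hPnorm : ‖P τ ψ‖ = n (ρ τ) := by
    rw [hP, norm_smul, norm_unitVec, mul_one, norm_of_nonneg (hnpos _).le]
  have hnρ := (hnpos (ρ τ)).ne'
  have hρ := (hρpos τ hτ).ne'
  rw [hX', hP', hXnorm, hPnorm, hX, hP, smul_smul, smul_smul]
  constructor <;> congr 1 <;> field_simp

/-- In the axisymmetric example, `X(τ,ψ) = ρ(τ) n(ψ)`, `P(τ,ψ) = n(ρ(τ)) n(ψ)`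
(with `ρ` the inverse of `T(r) = ∫₀^r n`) solves the Hamiltonian system for
`H(x,p) = ‖p‖ / n(‖x‖)`: `X_τ = P/(‖P‖ n(‖X‖))` and
`P_τ = ‖P‖ n′(‖X‖) X / (n(‖X‖)² ‖X‖)`. -/
theorem axisymmetric_hamiltonian_system
    (n : ℝ → ℝ) (hn : ContDiff ℝ 1 n) (hnpos : ∀ r, 0 < n r)
    (T : ℝ → ℝ) (hT : ∀ r, T r = ∫ s in (0:ℝ)..r, n s)
    (I : Set ℝ) (hIopen : IsOpen I) (hIconn : I.OrdConnected)
    (ρ : ℝ → ℝ)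
    (hρdiff : ∀ τ ∈ I, DifferentiableAt ℝ ρ τ)
    (hρpos : ∀ τ ∈ I, 0 < ρ τ)
    (hTρ : ∀ τ ∈ I, T (ρ τ) = τ)
    (X P : ℝ → ℝ → EuclideanSpace ℝ (Fin 2))
    (hX : ∀ τ ψ, X τ ψ = ρ τ • unitVec ψ)
    (hP : ∀ τ ψ, P τ ψ = n (ρ τ) • unitVec ψ) :
    ∀ τ ∈ I, ∀ ψ : ℝ,
      deriv (fun t => X t ψ) τ = (1 / (‖P τ ψ‖ * n ‖X τ ψ‖)) • P τ ψ ∧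
      deriv (fun t => P t ψ) τ =
        ((‖P τ ψ‖ * deriv n ‖X τ ψ‖) / ((n ‖X τ ψ‖) ^ 2 * ‖X τ ψ‖)) • X τ ψ :=
  axisymmetric_hamiltonian_system_general n hn hnpos T hT I hIopen ρ hρdiff hρpos hTρ X P hX hP
end
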